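/- arXiv:2007.02520 — 6 statements merged into one kernel-verified Lean document; each statement's English description precedes it below -/
import Mathlib

section
/- Let E be a real normed vector space and let f : E → ℝ be differentiable with Fréchet derivative f′. Suppose f(x) ≥ 0 for all x ∈ E and f′ is β-Lipschitz for some β > 0, i.e. ‖f′(x) − f′(y)‖ ≤ β‖x − y‖ in the operator norm for all x, y ∈ E. Then for every x ∈ E, ‖f′(x)‖² ≤ 4β f(x). -/
/-!
Since `f'` is `β`-Lipschitz, the mean value inequality bounds the first-order Taylor remainder:
`f (x + v) ≤ f x + f' x v + β ‖v‖²`. As `f ≥ 0`, the quadratic `s ↦ f x + s f' x v + β s² ‖v‖²`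
is non-negative on all of `ℝ`, so its discriminant `(f' x v)² - 4 β ‖v‖² f x` is non-positive.
Taking the supremum over unit vectors `v` bounds `‖f' x‖²` by `4 β f x`.
-/

open Metric

theorem norm_sub_sub_apply_le_of_lipschitz_fderiv
    {E F : Type*} [NormedAddCommGroup E] [NormedSpace ℝ E] [NormedAddCommGroup F]
    [NormedSpace ℝ F] {f : E → F} {f' : E → E →L[ℝ] F} {β : ℝ} (hβ : 0 ≤ β)
    (hderiv : ∀ x, HasFDerivAt f (f' x) x) (hlip : ∀ x y, ‖f' x - f' y‖ ≤ β * ‖x - y‖)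
    (x v : E) : ‖f (x + v) - f x - f' x v‖ ≤ β * ‖v‖ ^ 2 := by
  have hbound : ∀ y ∈ closedBall x ‖v‖, ‖f' y - f' x‖ ≤ β * ‖v‖ := fun y hy =>
    (hlip y x).trans (mul_le_mul_of_nonneg_left (mem_closedBall_iff_norm.mp hy) hβ)
  have hmvt := (convex_closedBall x ‖v‖).norm_image_sub_le_of_norm_hasFDerivWithin_le'
    (fun y _ => (hderiv y).hasFDerivWithinAt) hbound (mem_closedBall_self (norm_nonneg v))
    (y := x + v) (mem_closedBall_iff_norm.mpr (by simp))
  simpa [sq, mul_assoc] using hmvt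

theorem ContinuousLinearMap.sq_apply_le_of_forall_nonneg
    {E : Type*} [SeminormedAddCommGroup E] [NormedSpace ℝ E] (ℓ : E →L[ℝ] ℝ) {c β : ℝ}
    (h : ∀ v, 0 ≤ c + ℓ v + β * ‖v‖ ^ 2) (v : E) : ℓ v ^ 2 ≤ 4 * β * c * ‖v‖ ^ 2 := by
  have hdiscrim : discrim (β * ‖v‖ ^ 2) (ℓ v) c ≤ 0 := discrim_le_zero fun s => by
    have := h (s • v)
    rw [map_smul, smul_eq_mul, norm_smul, Real.norm_eq_abs, mul_pow, sq_abs] at this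
    linarith
  rw [discrim] at hdiscrim
  linarith

theorem ContinuousLinearMap.opNorm_sq_le_of_apply_sq_le
    {E F : Type*} [SeminormedAddCommGroup E] [NormedSpace ℝ E] [SeminormedAddCommGroup F]
    [NormedSpace ℝ F] (g : E →L[ℝ] F) {C : ℝ} (hC : 0 ≤ C)
    (h : ∀ v, ‖g v‖ ^ 2 ≤ C * ‖v‖ ^ 2) : ‖g‖ ^ 2 ≤ C := by
  have hnorm : ‖g‖ ≤ √C := g.opNorm_le_bound (Real.sqrt_nonneg C) fun v => by
    rw [← Real.sqrt_sq (norm_nonneg v), ← Real.sqrt_mul hC]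
    exact Real.le_sqrt_of_sq_le (h v)
  calc ‖g‖ ^ 2 ≤ √C ^ 2 := pow_le_pow_left₀ (norm_nonneg g) hnorm 2
    _ = C := Real.sq_sqrt hC

/-- Lemma 1 (self-bounding property of smooth non-negative functions):
if `f : E → ℝ` is differentiable with derivative `f'`, non-negative, and `f'`
is `β`-Lipschitz in the operator norm, then `‖f' x‖² ≤ 4 β f x` for all `x`. -/
theorem self_bounding_of_smooth_nonneg
    {E : Type*} [NormedAddCommGroup E] [NormedSpace ℝ E]
    (f : E → ℝ) (f' : E → E →L[ℝ] ℝ) (β : ℝ) (hβ : 0 < β)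
    (hderiv : ∀ x, HasFDerivAt f (f' x) x)
    (hnonneg : ∀ x, 0 ≤ f x)
    (hlip : ∀ x y, ‖f' x - f' y‖ ≤ β * ‖x - y‖) :
    ∀ x, ‖f' x‖ ^ 2 ≤ 4 * β * f x := by
  intro x
  have hquadratic : ∀ v, 0 ≤ f x + f' x v + β * ‖v‖ ^ 2 := fun v => by
    have hremainder := norm_sub_sub_apply_le_of_lipschitz_fderiv hβ.le hderiv hlip x v
    rw [Real.norm_eq_abs] at hremainder
    linarith [(abs_le.mp hremainder).2, hnonneg (x + v)]
  refine (f' x).opNorm_sq_le_of_apply_sq_le (mul_nonneg (by positivity) (hnonneg x)) fun v => ?_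
  rw [Real.norm_eq_abs, sq_abs]
  exact (f' x).sq_apply_le_of_forall_nonneg hquadratic v
end

section
/- Let g : ℝ → ℝ be differentiable with g(u) ≥ 0 for all u ∈ ℝ, and suppose g′ is β-Lipschitz for some β > 0, i.e. |g′(u) − g′(v)| ≤ β|u − v| for all u, v ∈ ℝ. Then for every u ∈ ℝ, g′(u)² ≤ 4β g(u). -/
/-- Descent lemma helper: the auxiliary function is nonnegative everywhere. -/
theorem descent_aux
    (g g' : ℝ → ℝ) (β : ℝ) (hβ : 0 < β)
    (hderiv : ∀ u, HasDerivAt g (g' u) u)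
    (hlip : ∀ u v, |g' u - g' v| ≤ β * |u - v|) :
    ∀ u v, g v ≤ g u + g' u * (v - u) + β / 2 * (v - u) ^ 2 := by
  intro u v
  set F : ℝ → ℝ := fun x => g u + g' u * (x - u) + β / 2 * (x - u) ^ 2 - g x with hF
  have hF' : ∀ x, HasDerivAt F (g' u + β * (x - u) - g' x) x := by
    intro x
    have h1 : HasDerivAt (fun x : ℝ => g u + g' u * (x - u) + β / 2 * (x - u) ^ 2)
        (g' u + β * (x - u)) x := by
      have : HasDerivAt (fun x : ℝ => g u + g' u * (x - u) + β / 2 * (x - u) ^ 2)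
          (0 + g' u * 1 + β / 2 * (2 * (x - u) ^ 1 * 1)) x := by
        exact (((hasDerivAt_const x (g u)).add
          ((hasDerivAt_id x).sub_const u |>.const_mul (g' u))).add
          (((hasDerivAt_id x).sub_const u |>.pow 2).const_mul (β / 2)))
      convert this using 1; ring
    exact h1.sub (hderiv x)
  have hdiff : Differentiable ℝ F := fun x => (hF' x).differentiableAt
  have hderivF : ∀ x, deriv F x = g' u + β * (x - u) - g' x := fun x => (hF' x).deriv
  have hFu : F u = 0 := by simp [hF]
  have key : 0 ≤ F v := by
    rcases le_total u v with huv | huv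
    · -- F monotone on [u, ∞)
      have hmono : MonotoneOn F (Set.Ici u) := by
        apply monotoneOn_of_deriv_nonneg (convex_Ici u) hdiff.continuous.continuousOn
          (hdiff.differentiableOn)
        intro x hx
        rw [interior_Ici] at hx
        rw [hderivF]
        have h := (abs_le.mp (hlip u x)).1
        have : |u - x| = x - u := by rw [abs_sub_comm]; exact abs_of_nonneg (by linarith [hx.out])
        rw [this] at h
        linarith
      have := hmono (Set.self_mem_Ici) huv huv
      rwa [hFu] at this
    · have hanti : AntitoneOn F (Set.Iic u) := by
        apply antitoneOn_of_deriv_nonpos (convex_Iic u) hdiff.continuous.continuousOn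
          (hdiff.differentiableOn)
        intro x hx
        rw [interior_Iic] at hx
        rw [hderivF]
        have h := (abs_le.mp (hlip u x)).2
        have : |u - x| = u - x := abs_of_nonneg (by linarith [hx.out])
        rw [this] at h
        linarith
      have := hanti huv (Set.self_mem_Iic) huv
      rwa [hFu] at this
  simpa [hF, sub_nonneg] using key

/-- Scalar self-bounding property: if `g : ℝ → ℝ` is differentiable with derivative `g'`,
non-negative, and `g'` is `β`-Lipschitz, then `(g' u)² ≤ 4 β g u` for all `u`. -/
theorem scalar_self_bounding_of_smooth_nonneg
    (g g' : ℝ → ℝ) (β : ℝ) (hβ : 0 < β)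
    (hderiv : ∀ u, HasDerivAt g (g' u) u)
    (hnonneg : ∀ u, 0 ≤ g u)
    (hlip : ∀ u v, |g' u - g' v| ≤ β * |u - v|) :
    ∀ u, (g' u) ^ 2 ≤ 4 * β * g u := by
  intro u
  have h := descent_aux g g' β hβ hderiv hlip u (u - g' u / β)
  have h0 := hnonneg (u - g' u / β)
  have hβ' : β ≠ 0 := ne_of_gt hβ
  have hsimp : g u + g' u * (u - g' u / β - u) + β / 2 * (u - g' u / β - u) ^ 2
      = g u - g' u ^ 2 / (2 * β) := by field_simp; ring
  rw [hsimp] at h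
  have : g' u ^ 2 ≤ 2 * β * g u := by
    have := le_trans h0 h
    have h2 : 0 < 2 * β := by linarith
    rw [le_sub_iff_add_le, zero_add, div_le_iff₀ h2] at this
    linarith [this]
  nlinarith [hnonneg u]
end

section
/- Let β > 0, r > 0 and A ≥ 0, B ≥ 0 be real numbers, and set λ = β + √(β² + βB/r²). If A ≤ λr² + (β/λ)A + (β/λ)B, then A ≤ 2λr², and moreover 2λr² ≤ 4βr² + 2√(βr²B). -/
/-!
With `s = √(β² + βB/r²)` and `λ = β + s`, the inequality reads `A ≤ c + θA` with `θ = β/λ < 1`,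
so `A ≤ c/(1 - θ) = (λ²r² + βB)/s`. The choice of `λ` makes `λ²r² + βB = 2λr²s`, since
`(β + s)² - 2(β + s)s = β² - s² = -βB/r²`; hence `A ≤ 2λr²`. Finally
`r²s = √(β²r⁴ + βr²B) ≤ βr² + √(βr²B)` by subadditivity of the square root.
-/

open Real

lemma sqrt_add_le_sqrt_add_sqrt {x y : ℝ} (hx : 0 ≤ x) (hy : 0 ≤ y) : √(x + y) ≤ √x + √y := by
  rw [sqrt_le_iff]
  refine ⟨by positivity, ?_⟩
  nlinarith [sq_sqrt hx, sq_sqrt hy, sqrt_nonneg x, sqrt_nonneg y]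

lemma mul_sqrt_sq_add_div_le {a x y : ℝ} (ha : 0 ≤ a) (hx : 0 ≤ x) (hy : 0 ≤ y) :
    a * √(x ^ 2 + y / a) ≤ a * x + √(a * y) :=
  calc a * √(x ^ 2 + y / a) = √((a * x) ^ 2 + a * y) := by
        rw [← sqrt_sq ha, ← sqrt_mul (sq_nonneg a), sqrt_sq ha]
        rcases ha.eq_or_lt with rfl | ha
        · simp
        · congr 1; field_simp
    _ ≤ √((a * x) ^ 2) + √(a * y) := sqrt_add_le_sqrt_add_sqrt (sq_nonneg _) (by positivity)
    _ = a * x + √(a * y) := by rw [sqrt_sq (by positivity)]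

lemma le_div_one_sub_of_le_add_mul {A c θ : ℝ} (hθ : θ < 1) (h : A ≤ c + θ * A) :
    A ≤ c / (1 - θ) := by
  rw [le_div_iff₀ (by linarith)]
  linarith

lemma add_mul_div_one_sub_div_eq {β s c t : ℝ} (hs : s ^ 2 * c = β ^ 2 * c + β * t)
    (hs0 : s ≠ 0) (hβs : β + s ≠ 0) :
    ((β + s) * c + β / (β + s) * t) / (1 - β / (β + s)) = 2 * (β + s) * c := by
  have h1 : 1 - β / (β + s) = s / (β + s) := by field_simp; ring
  rw [h1, div_eq_iff (by positivity)]
  field_simp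
  linear_combination -hs

theorem self_bounding_resolution_general
    (β r A B lam : ℝ) (hβ : 0 < β) (hr : 0 < r) (hB : 0 ≤ B)
    (hlam : lam = β + Real.sqrt (β ^ 2 + β * B / r ^ 2))
    (h : A ≤ lam * r ^ 2 + (β / lam) * A + (β / lam) * B) :
    A ≤ 2 * lam * r ^ 2 ∧
      2 * lam * r ^ 2 ≤ 4 * β * r ^ 2 + 2 * Real.sqrt (β * r ^ 2 * B) := by
  set s := √(β ^ 2 + β * B / r ^ 2)
  have hs_sq : s ^ 2 * r ^ 2 = β ^ 2 * r ^ 2 + β * B := by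
    rw [sq_sqrt (by positivity)]
    field_simp
  have hs_pos : 0 < s := by positivity
  have hlam_pos : 0 < lam := by rw [hlam]; positivity
  constructor
  · have hθ : β / lam < 1 := by rw [div_lt_one hlam_pos, hlam]; linarith
    calc A ≤ (lam * r ^ 2 + β / lam * B) / (1 - β / lam) :=
          le_div_one_sub_of_le_add_mul hθ (by linarith)
      _ = 2 * lam * r ^ 2 := by
          subst hlam
          exact add_mul_div_one_sub_div_eq hs_sq hs_pos.ne' hlam_pos.ne'
  · have hrs := mul_sqrt_sq_add_div_le (sq_nonneg r) hβ.le (mul_nonneg hβ.le hB)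
    rw [hlam, show β * r ^ 2 * B = r ^ 2 * (β * B) by ring]
    linarith

/-- Algebraic resolution of the self-bounding inequality at the optimal multiplier
`λ = β + √(β² + βB/r²)`: if `A ≤ λr² + (β/λ)A + (β/λ)B` then `A ≤ 2λr²`, and moreover
`2λr² ≤ 4βr² + 2√(βr²B)`. -/
theorem self_bounding_resolution
    (β r A B lam : ℝ) (hβ : 0 < β) (hr : 0 < r) (hA : 0 ≤ A) (hB : 0 ≤ B)
    (hlam : lam = β + Real.sqrt (β ^ 2 + β * B / r ^ 2))
    (h : A ≤ lam * r ^ 2 + (β / lam) * A + (β / lam) * B) :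
    A ≤ 2 * lam * r ^ 2 ∧
      2 * lam * r ^ 2 ≤ 4 * β * r ^ 2 + 2 * Real.sqrt (β * r ^ 2 * B) :=
  self_bounding_resolution_general β r A B lam hβ hr hB hlam h
end

section
/- Let E be a real normed vector space, Θ ⊆ E a nonempty closed convex set, and f₁, …, f_N : E → ℝ functions each of which is CSN with smoothness β > 0. Let θ₁, …, θ_N ∈ Θ, let ε̂ = (1/N) inf_{θ ∈ Θ} Σ_{n=1}^N f_n(θ), and let Ê ≥ ε̂. Let R > 0 and set η* = 1/(2(β + √(β² + βNÊ/(2R²)))). If Regret(f_n) ≤ R²/η* + (η*/2) Σ_{n=1}^N ‖f_n′(θ_n)‖², then Regret(f_n) ≤ 8βR² + √(8βR²NÊ). -/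
/-!
For a non-negative function with `β`-Lipschitz derivative the descent lemma, applied along the
direction of steepest descent, gives the self-bounding inequality `‖f'(x)‖² ≤ 2 β f(x)`. Hence
`Σ ‖f_n'(θ_n)‖² ≤ 2 β (Regret + N ε̂)`, and the assumed bound becomes
`Regret ≤ R²/η + η β (Regret + N Ê)`. The tuned stepsize `η*` makes `η* β ≤ 1/4` and balances
`R²/η*` against `η* β N Ê`, and `√(β² + x) ≤ β + √x` yields the stated bound.
-/

open Finset

/-- A differentiable function `f : E → ℝ` is CSN with smoothness `β` if it is convex,
non-negative, and its Fréchet derivative is `β`-Lipschitz in the operator (dual) norm. -/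
def IsCSN {E : Type*} [NormedAddCommGroup E] [NormedSpace ℝ E]
    (f : E → ℝ) (β : ℝ) : Prop :=
  ConvexOn ℝ Set.univ f ∧ (∀ x, 0 ≤ f x) ∧ Differentiable ℝ f ∧
    ∀ x y, ‖fderiv ℝ f x - fderiv ℝ f y‖ ≤ β * ‖x - y‖

/-- `Regret(f_n) = Σ_{n=1}^N f_n(θ_n) − inf_{θ ∈ Θ} Σ_{n=1}^N f_n(θ)`. -/
noncomputable def regret {E : Type*} (Θ : Set E) (N : ℕ)
    (f : ℕ → E → ℝ) (θ : ℕ → E) : ℝ :=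
  (∑ n ∈ Finset.Icc 1 N, f n (θ n))
    - sInf ((fun x => ∑ n ∈ Finset.Icc 1 N, f n x) '' Θ)

section SmoothFunction

variable {E : Type*} [NormedAddCommGroup E] [NormedSpace ℝ E] {f : E → ℝ} {β : ℝ}

theorem fderiv_add_smul_apply_sub_le (hL : ∀ x y, ‖fderiv ℝ f x - fderiv ℝ f y‖ ≤ β * ‖x - y‖)
    (x v : E) {t : ℝ} (ht : 0 ≤ t) :
    fderiv ℝ f (x + t • v) v - fderiv ℝ f x v ≤ β * ‖v‖ ^ 2 * t :=
  calc fderiv ℝ f (x + t • v) v - fderiv ℝ f x v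
      = (fderiv ℝ f (x + t • v) - fderiv ℝ f x) v := rfl
    _ ≤ ‖fderiv ℝ f (x + t • v) - fderiv ℝ f x‖ * ‖v‖ :=
        (Real.le_norm_self _).trans (ContinuousLinearMap.le_opNorm _ _)
    _ ≤ β * ‖t • v‖ * ‖v‖ := by
        gcongr
        simpa using hL (x + t • v) x
    _ = β * ‖v‖ ^ 2 * t := by rw [norm_smul, Real.norm_of_nonneg ht]; ring

theorem apply_add_le_of_norm_fderiv_sub_le (hd : Differentiable ℝ f)
    (hL : ∀ x y, ‖fderiv ℝ f x - fderiv ℝ f y‖ ≤ β * ‖x - y‖) (x v : E) :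
    f (x + v) ≤ f x + fderiv ℝ f x v + β / 2 * ‖v‖ ^ 2 := by
  set c := fderiv ℝ f x v
  set ψ : ℝ → ℝ := fun t ↦ f x + t * c + β / 2 * ‖v‖ ^ 2 * t ^ 2 - f (x + t • v)
  have hψ : ∀ t, HasDerivAt ψ (c + β * ‖v‖ ^ 2 * t - fderiv ℝ f (x + t • v) v) t := by
    intro t
    have hline : HasDerivAt (fun t : ℝ ↦ x + t • v) v t := by
      simpa using ((hasDerivAt_id t).smul_const v).const_add x
    have hquad : HasDerivAt (fun t : ℝ ↦ f x + t * c + β / 2 * ‖v‖ ^ 2 * t ^ 2)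
        (c + β * ‖v‖ ^ 2 * t) t := by
      refine ((((hasDerivAt_id' t).mul_const c).const_add (f x)).add
        ((hasDerivAt_pow 2 t).const_mul (β / 2 * ‖v‖ ^ 2))).congr_deriv ?_
      push_cast
      ring
    exact hquad.sub ((hd _).hasFDerivAt.comp_hasDerivAt t hline)
  have hmono : MonotoneOn ψ (Set.Ici 0) := by
    refine monotoneOn_of_deriv_nonneg (convex_Ici 0)
      (fun t _ ↦ (hψ t).continuousAt.continuousWithinAt)
      (fun t _ ↦ (hψ t).differentiableAt.differentiableWithinAt) fun t ht ↦ ?_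
    rw [interior_Ici] at ht
    rw [(hψ t).deriv, sub_nonneg]
    linarith [fderiv_add_smul_apply_sub_le hL x v (le_of_lt ht)]
  have h01 : ψ 0 ≤ ψ 1 := hmono Set.self_mem_Ici (Set.mem_Ici.2 zero_le_one) zero_le_one
  simpa [ψ] using h01

theorem sq_norm_fderiv_le_of_nonneg (hβ : 0 ≤ β) (hf : ∀ x, 0 ≤ f x) (hd : Differentiable ℝ f)
    (hL : ∀ x y, ‖fderiv ℝ f x - fderiv ℝ f y‖ ≤ β * ‖x - y‖) (x : E) :
    ‖fderiv ℝ f x‖ ^ 2 ≤ 2 * β * f x := by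
  have hsq : ∀ w, (fderiv ℝ f x w) ^ 2 ≤ 2 * β * f x * ‖w‖ ^ 2 := by
    intro w
    have hquad : ∀ t : ℝ, 0 ≤ β / 2 * ‖w‖ ^ 2 * (t * t) + -fderiv ℝ f x w * t + f x := by
      intro t
      have := apply_add_le_of_norm_fderiv_sub_le hd hL x (-(t • w))
      simp only [map_neg, map_smul, norm_neg, norm_smul, smul_eq_mul, Real.norm_eq_abs,
        mul_pow, sq_abs] at this
      nlinarith [hf (x + -(t • w))]
    have := discrim_le_zero hquad
    rw [discrim] at this
    linarith
  have hbound : ‖fderiv ℝ f x‖ ≤ √(2 * β * f x) := by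
    refine ContinuousLinearMap.opNorm_le_bound _ (Real.sqrt_nonneg _) fun w ↦ ?_
    rw [Real.norm_eq_abs, ← Real.sqrt_sq (norm_nonneg w),
      ← Real.sqrt_mul (mul_nonneg (mul_nonneg zero_le_two hβ) (hf x))]
    exact Real.abs_le_sqrt (hsq w)
  exact (Real.le_sqrt (norm_nonneg _) (mul_nonneg (mul_nonneg zero_le_two hβ) (hf x))).1 hbound

end SmoothFunction

theorem regret_le_of_tuned_stepsize {reg S G n E β R η : ℝ} (hβ : 0 < β) (hR : 0 < R) (hS : 0 ≤ S)
    (hSE : S ≤ n * E) (hη : η = 1 / (2 * (β + √(β ^ 2 + β * n * E / (2 * R ^ 2)))))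
    (hG : G ≤ 2 * β * (reg + S)) (hreg : reg ≤ R ^ 2 / η + η / 2 * G) :
    reg ≤ 8 * β * R ^ 2 + √(8 * β * R ^ 2 * n * E) := by
  set X := β * n * E / (2 * R ^ 2)
  set s := √(β ^ 2 + X)
  have hX : 0 ≤ X := div_nonneg (by rw [mul_assoc]; positivity [hS.trans hSE]) (by positivity)
  have hX_mul : X * (2 * R ^ 2) = β * n * E := div_mul_cancel₀ _ (by positivity)
  have hs_sq : s ^ 2 = β ^ 2 + X := Real.sq_sqrt (by positivity)
  have hβs : β ≤ s := Real.le_sqrt_of_sq_le (by linarith)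
  have hη_pos : 0 < η := by rw [hη]; positivity
  have hR_div : R ^ 2 / η = 2 * R ^ 2 * (β + s) := by rw [hη]; field_simp
  have hηβ : η * β ≤ 1 / 4 := by
    rw [hη, div_mul_eq_mul_div, div_le_div_iff₀ (by positivity) (by norm_num)]
    linarith
  have hηnE : η * β * (n * E) = R ^ 2 * (s - β) := by
    have hβnE : β * n * E = 2 * R ^ 2 * (s - β) * (β + s) := by
      rw [← hX_mul]; linear_combination (-2 * R ^ 2) * hs_sq
    have hβs_ne : β + s ≠ 0 := by positivity
    calc η * β * (n * E) = β * n * E / (2 * (β + s)) := by rw [hη]; ring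
      _ = R ^ 2 * (s - β) := by rw [hβnE]; field_simp
  have hreg_smooth : reg ≤ R ^ 2 / η + η * β * (reg + S) := by
    linarith [mul_le_mul_of_nonneg_left hG (half_pos hη_pos).le]
  have hreg_mul : reg * (1 - η * β) ≤ R ^ 2 * (β + 3 * s) := by
    linarith [mul_le_mul_of_nonneg_left hSE (by positivity : 0 ≤ η * β)]
  have hreg_bound : reg ≤ 4 / 3 * (R ^ 2 * (β + 3 * s)) :=
    calc reg ≤ R ^ 2 * (β + 3 * s) / (1 - η * β) := (le_div_iff₀ (by linarith)).2 hreg_mul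
      _ ≤ R ^ 2 * (β + 3 * s) / (3 / 4) :=
        div_le_div_of_nonneg_left (by positivity) (by norm_num) (by linarith)
      _ = 4 / 3 * (R ^ 2 * (β + 3 * s)) := by ring
  have hs_le : s ≤ β + √X :=
    (Real.sqrt_le_left (by positivity)).2 (by nlinarith [Real.sq_sqrt hX, Real.sqrt_nonneg X])
  have hsqrt : √(8 * β * R ^ 2 * n * E) = 4 * R ^ 2 * √X := by
    rw [show 8 * β * R ^ 2 * n * E = (4 * R ^ 2) ^ 2 * X by
        linear_combination (-8 * R ^ 2) * hX_mul,
      Real.sqrt_mul (by positivity), Real.sqrt_sq (by positivity)]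
  rw [hsqrt]
  linarith [mul_le_mul_of_nonneg_left hs_le (sq_nonneg R), mul_pos hβ (pow_pos hR 2)]

theorem bias_dependent_regret_general
    {E : Type*} [NormedAddCommGroup E] [NormedSpace ℝ E]
    (Θ : Set E)
    (N : ℕ) (hN : 1 ≤ N)
    (f : ℕ → E → ℝ) (β : ℝ) (hβ : 0 < β)
    (hCSN : ∀ n ∈ Finset.Icc 1 N, IsCSN (f n) β)
    (θ : ℕ → E)
    (εhat Ehat R ηstar : ℝ)
    (hεhat : εhat = (1 / (N : ℝ)) * sInf ((fun x => ∑ n ∈ Finset.Icc 1 N, f n x) '' Θ))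
    (hEhat : εhat ≤ Ehat)
    (hR : 0 < R)
    (hη : ηstar = 1 / (2 * (β + Real.sqrt (β ^ 2 + β * N * Ehat / (2 * R ^ 2)))))
    (hreg : regret Θ N f θ ≤ R ^ 2 / ηstar
        + (ηstar / 2) * ∑ n ∈ Finset.Icc 1 N, ‖fderiv ℝ (f n) (θ n)‖ ^ 2) :
    regret Θ N f θ ≤ 8 * β * R ^ 2 + Real.sqrt (8 * β * R ^ 2 * N * Ehat) := by
  set S := sInf ((fun x => ∑ n ∈ Finset.Icc 1 N, f n x) '' Θ)
  have hS : 0 ≤ S := Real.sInf_nonneg <| by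
    rintro _ ⟨x, -, rfl⟩
    exact sum_nonneg fun n hn ↦ (hCSN n hn).2.1 x
  have hSE : S ≤ N * Ehat := by
    rwa [hεhat, one_div_mul_eq_div, div_le_iff₀' (by exact_mod_cast hN)] at hEhat
  have hG : ∑ n ∈ Icc 1 N, ‖fderiv ℝ (f n) (θ n)‖ ^ 2 ≤ 2 * β * (regret Θ N f θ + S) :=
    calc ∑ n ∈ Icc 1 N, ‖fderiv ℝ (f n) (θ n)‖ ^ 2 ≤ ∑ n ∈ Icc 1 N, 2 * β * f n (θ n) :=
          sum_le_sum fun n hn ↦ have ⟨_, hnonneg, hd, hL⟩ := hCSN n hn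
            sq_norm_fderiv_le_of_nonneg hβ.le hnonneg hd hL (θ n)
      _ = 2 * β * (regret Θ N f θ + S) := by rw [← mul_sum, regret, sub_add_cancel]
  exact regret_le_of_tuned_stepsize hβ hR hS hSE hη hG hreg

/-- Lemma B.1: bias-dependent regret bound for admissible online algorithms with the
tuned constant stepsize `η* = 1/(2(β + √(β² + βNÊ/(2R²))))`. -/
theorem bias_dependent_regret
    {E : Type*} [NormedAddCommGroup E] [NormedSpace ℝ E]
    (Θ : Set E) (hne : Θ.Nonempty) (hcl : IsClosed Θ) (hcv : Convex ℝ Θ)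
    (N : ℕ) (hN : 1 ≤ N)
    (f : ℕ → E → ℝ) (β : ℝ) (hβ : 0 < β)
    (hCSN : ∀ n ∈ Finset.Icc 1 N, IsCSN (f n) β)
    (θ : ℕ → E) (hθ : ∀ n ∈ Finset.Icc 1 N, θ n ∈ Θ)
    (εhat Ehat R ηstar : ℝ)
    (hεhat : εhat = (1 / (N : ℝ)) * sInf ((fun x => ∑ n ∈ Finset.Icc 1 N, f n x) '' Θ))
    (hEhat : εhat ≤ Ehat)
    (hR : 0 < R)
    (hη : ηstar = 1 / (2 * (β + Real.sqrt (β ^ 2 + β * N * Ehat / (2 * R ^ 2)))))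
    (hreg : regret Θ N f θ ≤ R ^ 2 / ηstar
        + (ηstar / 2) * ∑ n ∈ Finset.Icc 1 N, ‖fderiv ℝ (f n) (θ n)‖ ^ 2) :
    regret Θ N f θ ≤ 8 * β * R ^ 2 + Real.sqrt (8 * β * R ^ 2 * N * Ehat) :=
  bias_dependent_regret_general Θ N hN f β hβ hCSN θ εhat Ehat R ηstar hεhat hEhat hR hη hreg
end

section
/- Let E be a real normed vector space, Θ ⊆ E a nonempty closed convex set, and f₁, …, f_N : E → ℝ functions each of which is CSN with smoothness β > 0. Let θ₁, …, θ_N ∈ Θ, let ε̂ = (1/N) inf_{θ ∈ Θ} Σ_{n=1}^N f_n(θ), and let Ê ≥ ε̂. Let R > 0 and K > 0, and assume that for every η > 0, Regret(f_n) ≤ K(R²/η + (η/2) Σ_{n=1}^N ‖f_n′(θ_n)‖²). Then Regret(f_n) ≤ 8K²βR² + √(8K²βR²NÊ). -/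
open Finset

/-! A non-negative function with `β`-Lipschitz derivative is self-bounding,
`‖f′(x)‖² ≤ 4β f(x)`, so `Σ ‖f_n′(θ_n)‖² ≤ 4β (Regret + N Ê)`. Choosing `η` to balance the two
terms of the assumed bound turns it into the quadratic inequality
`Regret² ≤ 8K²βR² (Regret + N Ê)`, and solving it gives the claim. -/

section SelfBounding

variable {E : Type*} [NormedAddCommGroup E] [NormedSpace ℝ E] {f : E → ℝ} {β : ℝ}

theorem sub_sub_fderiv_le_mul_norm_sq (hβ : 0 ≤ β) (hdiff : Differentiable ℝ f)
    (hlip : ∀ x y, ‖fderiv ℝ f x - fderiv ℝ f y‖ ≤ β * ‖x - y‖) (x y : E) :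
    f y - f x - fderiv ℝ f x (y - x) ≤ β * ‖y - x‖ ^ 2 := by
  have hbound : ∀ z ∈ Metric.closedBall x ‖y - x‖,
      ‖fderiv ℝ f z - fderiv ℝ f x‖ ≤ β * ‖y - x‖ := fun z hz =>
    (hlip z x).trans (mul_le_mul_of_nonneg_left (mem_closedBall_iff_norm.mp hz) hβ)
  have hmv := (convex_closedBall x ‖y - x‖).norm_image_sub_le_of_norm_fderiv_le'
    (fun z _ => hdiff z) hbound (Metric.mem_closedBall_self (norm_nonneg _))
    (mem_closedBall_iff_norm.mpr le_rfl)
  calc f y - f x - fderiv ℝ f x (y - x) ≤ ‖f y - f x - fderiv ℝ f x (y - x)‖ := le_abs_self _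
    _ ≤ β * ‖y - x‖ * ‖y - x‖ := hmv
    _ = β * ‖y - x‖ ^ 2 := by ring

theorem norm_fderiv_sq_le_of_nonneg (hβ : 0 ≤ β) (hnn : ∀ x, 0 ≤ f x)
    (hdiff : Differentiable ℝ f)
    (hlip : ∀ x y, ‖fderiv ℝ f x - fderiv ℝ f y‖ ≤ β * ‖x - y‖) (x : E) :
    ‖fderiv ℝ f x‖ ^ 2 ≤ 4 * β * f x := by
  set g := fderiv ℝ f x
  have hM : 0 ≤ 4 * β * f x := by have := hnn x; positivity
  -- `0 ≤ f (x - t • v)` and the descent bound make `t ↦ f x - t g v + β ‖v‖² t²` non-negative.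
  have hline : ∀ v : E, g v ^ 2 ≤ 4 * β * f x * ‖v‖ ^ 2 := by
    intro v
    have hdisc := discrim_le_zero (a := β * ‖v‖ ^ 2) (b := -g v) (c := f x) fun t => by
      have hdesc := sub_sub_fderiv_le_mul_norm_sq hβ hdiff hlip x (x - t • v)
      simp only [sub_sub_cancel_left, map_neg, map_smul, smul_eq_mul, norm_neg, norm_smul,
        Real.norm_eq_abs, mul_pow, sq_abs] at hdesc
      nlinarith [hnn (x - t • v)]
    rw [discrim] at hdisc
    linarith
  have hop : ‖g‖ ≤ Real.sqrt (4 * β * f x) := by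
    refine g.opNorm_le_bound (Real.sqrt_nonneg _) fun v => ?_
    rw [Real.norm_eq_abs, ← Real.sqrt_sq_eq_abs, ← Real.sqrt_sq (norm_nonneg v),
      ← Real.sqrt_mul hM]
    exact Real.sqrt_le_sqrt (hline v)
  calc ‖g‖ ^ 2 ≤ Real.sqrt (4 * β * f x) ^ 2 := pow_le_pow_left₀ (norm_nonneg _) hop 2
    _ = 4 * β * f x := Real.sq_sqrt hM

theorem IsCSN.norm_fderiv_sq_le (hf : IsCSN f β) (hβ : 0 ≤ β) (x : E) :
    ‖fderiv ℝ f x‖ ^ 2 ≤ 4 * β * f x :=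
  norm_fderiv_sq_le_of_nonneg hβ hf.2.1 hf.2.2.1 hf.2.2.2 x

end SelfBounding

theorem sq_le_four_mul_of_forall_le_div_add_mul {S A B : ℝ} (hS : 0 < S) (hB : 0 < B)
    (h : ∀ η : ℝ, 0 < η → S ≤ A / η + η * B) : S ^ 2 ≤ 4 * A * B := by
  have hopt := h (S / (2 * B)) (by positivity)
  have hsimp : A / (S / (2 * B)) + S / (2 * B) * B = 2 * A * B / S + S / 2 := by
    field_simp
  rw [hsimp, ← sub_le_iff_le_add, le_div_iff₀ hS] at hopt
  nlinarith

theorem le_add_sqrt_mul_of_sq_le {S C D : ℝ} (hC : 0 ≤ C) (hD : 0 ≤ D)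
    (h : S ^ 2 ≤ C * (S + D)) : S ≤ C + Real.sqrt (C * D) := by
  have ht := Real.sq_sqrt (mul_nonneg hC hD)
  nlinarith [Real.sqrt_nonneg (C * D), mul_nonneg hC (Real.sqrt_nonneg (C * D)),
    sq_nonneg (S - Real.sqrt (C * D))]

theorem bias_dependent_regret_adaptive_general
    {E : Type*} [NormedAddCommGroup E] [NormedSpace ℝ E]
    (Θ : Set E)
    (N : ℕ) (hN : 1 ≤ N)
    (f : ℕ → E → ℝ) (β : ℝ) (hβ : 0 < β)
    (hCSN : ∀ n ∈ Finset.Icc 1 N, IsCSN (f n) β)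
    (θ : ℕ → E)
    (εhat Ehat R K : ℝ)
    (hεhat : εhat = (1 / (N : ℝ)) * sInf ((fun x => ∑ n ∈ Finset.Icc 1 N, f n x) '' Θ))
    (hEhat : εhat ≤ Ehat)
    (hK : 0 < K)
    (hreg : ∀ η : ℝ, 0 < η → regret Θ N f θ
        ≤ K * (R ^ 2 / η + (η / 2) * ∑ n ∈ Finset.Icc 1 N, ‖fderiv ℝ (f n) (θ n)‖ ^ 2)) :
    regret Θ N f θ ≤ 8 * K ^ 2 * β * R ^ 2
      + Real.sqrt (8 * K ^ 2 * β * R ^ 2 * N * Ehat) := by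
  set S := regret Θ N f θ
  set I := sInf ((fun x => ∑ n ∈ Finset.Icc 1 N, f n x) '' Θ)
  have hNpos : (0 : ℝ) < N := by exact_mod_cast hN
  have hI_nonneg : 0 ≤ I := Real.sInf_nonneg <| by
    rintro _ ⟨x, -, rfl⟩
    exact sum_nonneg fun n hn => (hCSN n hn).2.1 x
  have hI_le : I ≤ N * Ehat := by
    rw [hεhat, one_div, inv_mul_le_iff₀ hNpos] at hEhat
    exact hEhat
  have hgrad : ∑ n ∈ Icc 1 N, ‖fderiv ℝ (f n) (θ n)‖ ^ 2 ≤ 4 * β * (S + N * Ehat) := calc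
    _ ≤ ∑ n ∈ Icc 1 N, 4 * β * f n (θ n) :=
      sum_le_sum fun n hn => (hCSN n hn).norm_fderiv_sq_le hβ.le (θ n)
    _ = 4 * β * (S + I) := by rw [← mul_sum]; unfold S regret; ring
    _ ≤ 4 * β * (S + N * Ehat) := by gcongr
  rcases le_or_gt S 0 with hS | hS
  · exact hS.trans (add_nonneg (by positivity) (Real.sqrt_nonneg _))
  have hP : 0 < S + N * Ehat := by linarith
  have hsq : S ^ 2 ≤ 4 * (K * R ^ 2) * (2 * K * β * (S + N * Ehat)) :=
    sq_le_four_mul_of_forall_le_div_add_mul hS (by positivity) fun η hη => calc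
      S ≤ K * (R ^ 2 / η + η / 2 * ∑ n ∈ Icc 1 N, ‖fderiv ℝ (f n) (θ n)‖ ^ 2) := hreg η hη
      _ ≤ K * (R ^ 2 / η + η / 2 * (4 * β * (S + N * Ehat))) := by gcongr
      _ = K * R ^ 2 / η + η * (2 * K * β * (S + N * Ehat)) := by ring
  rw [mul_assoc _ (N : ℝ)]
  exact le_add_sqrt_mul_of_sq_le (by positivity) (hI_nonneg.trans hI_le) (hsq.trans_eq (by ring))

/-- Lemma E.2: bias-dependent regret bound for admissible online algorithms with proper
adaptive stepsizes, encoded as the regret bound holding for every `η > 0` up to a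
multiplicative factor `K`. -/
theorem bias_dependent_regret_adaptive
    {E : Type*} [NormedAddCommGroup E] [NormedSpace ℝ E]
    (Θ : Set E) (hne : Θ.Nonempty) (hcl : IsClosed Θ) (hcv : Convex ℝ Θ)
    (N : ℕ) (hN : 1 ≤ N)
    (f : ℕ → E → ℝ) (β : ℝ) (hβ : 0 < β)
    (hCSN : ∀ n ∈ Finset.Icc 1 N, IsCSN (f n) β)
    (θ : ℕ → E) (hθ : ∀ n ∈ Finset.Icc 1 N, θ n ∈ Θ)
    (εhat Ehat R K : ℝ)
    (hεhat : εhat = (1 / (N : ℝ)) * sInf ((fun x => ∑ n ∈ Finset.Icc 1 N, f n x) '' Θ))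
    (hEhat : εhat ≤ Ehat)
    (hR : 0 < R) (hK : 0 < K)
    (hreg : ∀ η : ℝ, 0 < η → regret Θ N f θ
        ≤ K * (R ^ 2 / η + (η / 2) * ∑ n ∈ Finset.Icc 1 N, ‖fderiv ℝ (f n) (θ n)‖ ^ 2)) :
    regret Θ N f θ ≤ 8 * K ^ 2 * β * R ^ 2
      + Real.sqrt (8 * K ^ 2 * β * R ^ 2 * N * Ehat) :=
  bias_dependent_regret_adaptive_general Θ N hN f β hβ hCSN θ εhat Ehat R K hεhat hEhat hK hreg
end

section
/- Let E be a real normed vector space, Θ ⊆ E a nonempty set with ‖θ‖ ≤ R_Θ for all θ ∈ Θ, and θ₁, …, θ_N ∈ Θ. Let ℓ₁, …, ℓ_N and ℓ̂₁, …, ℓ̂_N be functions E → ℝ, each CSN with smoothness β > 0. Let ε = (1/N) inf_{θ∈Θ} Σ_{n=1}^N ℓ_n(θ) and ε̂ = (1/N) inf_{θ∈Θ} Σ_{n=1}^N ℓ̂_n(θ). Then Σ_{n=1}^N ((ℓ_n′(θ_n) − ℓ̂_n′(θ_n))(θ_n))² ≤ 8β R_Θ² (Regret(ℓ_n) + Regret(ℓ̂_n)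 + Nε + Nε̂). -/
/-! A non-negative function whose gradient is `β`-Lipschitz is self-bounding:
`(f' x v)² ≤ 4 β f(x) ‖v‖²`, because the quadratic upper bound
`0 ≤ f (x + t v) ≤ f x + t f' x v + β ‖v‖² t²` holds for every `t`, so its discriminant is
non-positive (the mean value inequality gives `β` rather than the sharp `β / 2` here, whence
`4 β`). Applied at `v = θ_n` with `‖θ_n‖ ≤ R_Θ`, together with `(a - b)² ≤ 2a² + 2b²`,
this bounds each summand by `8 β R_Θ² (ℓ_n(θ_n) + ℓ̂_n(θ_n))`; and the losses summed along the
path are exactly `Regret + N ε` for either sequence. -/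

open Finset

section SelfBounding

variable {E F : Type*} [NormedAddCommGroup E] [NormedSpace ℝ E]
  [NormedAddCommGroup F] [NormedSpace ℝ F]

theorem norm_sub_sub_fderiv_le_of_fderiv_lipschitz {f : E → F} {β : ℝ} (hβ : 0 ≤ β)
    (hf : Differentiable ℝ f) (hL : ∀ x y, ‖fderiv ℝ f x - fderiv ℝ f y‖ ≤ β * ‖x - y‖)
    (x y : E) : ‖f y - f x - fderiv ℝ f x (y - x)‖ ≤ β * ‖y - x‖ * ‖y - x‖ := by
  refine (convex_closedBall x ‖y - x‖).norm_image_sub_le_of_norm_fderiv_le' (fun z _ => hf z)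
    (fun z hz => ?_) (Metric.mem_closedBall_self (norm_nonneg _))
    (by rw [Metric.mem_closedBall, dist_eq_norm])
  rw [Metric.mem_closedBall, dist_eq_norm] at hz
  exact (hL z x).trans (mul_le_mul_of_nonneg_left hz hβ)

theorem sq_fderiv_apply_le_of_nonneg_of_fderiv_lipschitz {f : E → ℝ} {β : ℝ} (hβ : 0 ≤ β)
    (hf : Differentiable ℝ f) (hf_nonneg : ∀ x, 0 ≤ f x)
    (hL : ∀ x y, ‖fderiv ℝ f x - fderiv ℝ f y‖ ≤ β * ‖x - y‖) (x v : E) :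
    (fderiv ℝ f x v) ^ 2 ≤ 4 * β * f x * ‖v‖ ^ 2 := by
  have quadratic_nonneg : ∀ t : ℝ,
      0 ≤ (β * ‖v‖ ^ 2) * (t * t) + fderiv ℝ f x v * t + f x := by
    intro t
    have hdescent := norm_sub_sub_fderiv_le_of_fderiv_lipschitz hβ hf hL x (x + t • v)
    rw [add_sub_cancel_left, map_smul, smul_eq_mul, norm_smul] at hdescent
    simp only [Real.norm_eq_abs] at hdescent
    have habs : β * (|t| * ‖v‖) * (|t| * ‖v‖) = β * ‖v‖ ^ 2 * (t * t) := by
      rw [← abs_mul_abs_self t]; ring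
    linarith [hf_nonneg (x + t • v), (le_abs_self _).trans hdescent]
  have := discrim_le_zero quadratic_nonneg
  rw [discrim] at this
  linarith

theorem IsCSN.sq_fderiv_apply_le_of_norm_le {f : E → ℝ} {β R : ℝ} (hf : IsCSN f β)
    (hβ : 0 ≤ β) (x : E) {v : E} (hv : ‖v‖ ≤ R) :
    (fderiv ℝ f x v) ^ 2 ≤ 4 * β * R ^ 2 * f x := by
  have hnorm : ‖v‖ ^ 2 ≤ R ^ 2 := pow_le_pow_left₀ (norm_nonneg _) hv 2
  have hfx := hf.2.1 x
  calc (fderiv ℝ f x v) ^ 2 ≤ 4 * β * f x * ‖v‖ ^ 2 :=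
        sq_fderiv_apply_le_of_nonneg_of_fderiv_lipschitz hβ hf.2.2.1 hf.2.1 hf.2.2.2 x v
    _ ≤ 4 * β * R ^ 2 * f x := by nlinarith [mul_nonneg hβ hfx]

end SelfBounding

theorem regret_add_natCast_mul_inf {E : Type*} (Θ : Set E) (N : ℕ) (f : ℕ → E → ℝ)
    (θ : ℕ → E) :
    regret Θ N f θ + N * (1 / (N : ℝ) * sInf ((fun x => ∑ n ∈ Icc 1 N, f n x) '' Θ))
      = ∑ n ∈ Icc 1 N, f n (θ n) := by
  rcases Nat.eq_zero_or_pos N with rfl | hN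
  · have hinf : sInf ((fun _ => (0 : ℝ)) '' Θ) = 0 :=
      le_antisymm (Real.sInf_nonpos (by simp)) (Real.sInf_nonneg (by simp))
    simp [regret, hinf]
  · rw [regret, ← mul_assoc, mul_one_div_cancel (by positivity), one_mul, sub_add_cancel]

theorem V_bound_scalar_mds_general
    {E : Type*} [NormedAddCommGroup E] [NormedSpace ℝ E]
    (Θ : Set E) (RΘ : ℝ) (hRΘ : ∀ x ∈ Θ, ‖x‖ ≤ RΘ)
    (N : ℕ) (θ : ℕ → E) (hθ : ∀ n ∈ Finset.Icc 1 N, θ n ∈ Θ)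
    (l lhat : ℕ → E → ℝ) (β : ℝ) (hβ : 0 < β)
    (hlCSN : ∀ n ∈ Finset.Icc 1 N, IsCSN (l n) β)
    (hlhatCSN : ∀ n ∈ Finset.Icc 1 N, IsCSN (lhat n) β)
    (ε εhat : ℝ)
    (hε : ε = (1 / (N : ℝ)) * sInf ((fun x => ∑ n ∈ Finset.Icc 1 N, l n x) '' Θ))
    (hεhat : εhat = (1 / (N : ℝ)) * sInf ((fun x => ∑ n ∈ Finset.Icc 1 N, lhat n x) '' Θ)) :
    ∑ n ∈ Finset.Icc 1 N,
        ((fderiv ℝ (l n) (θ n) - fderiv ℝ (lhat n) (θ n)) (θ n)) ^ 2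
      ≤ 8 * β * RΘ ^ 2
          * (regret Θ N l θ + regret Θ N lhat θ + N * ε + N * εhat) := by
  have hsum : regret Θ N l θ + regret Θ N lhat θ + N * ε + N * εhat
      = ∑ n ∈ Icc 1 N, (l n (θ n) + lhat n (θ n)) := by
    rw [sum_add_distrib, ← regret_add_natCast_mul_inf Θ N l θ,
      ← regret_add_natCast_mul_inf Θ N lhat θ, hε, hεhat]
    ring
  rw [hsum, mul_sum]
  refine sum_le_sum fun n hn => ?_
  have hR := hRΘ _ (hθ n hn)
  have hl := (hlCSN n hn).sq_fderiv_apply_le_of_norm_le hβ.le (θ n) hR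
  have hlhat := (hlhatCSN n hn).sq_fderiv_apply_le_of_norm_le hβ.le (θ n) hR
  rw [sub_apply]
  nlinarith [sq_nonneg (fderiv ℝ (l n) (θ n) (θ n) + fderiv ℝ (lhat n) (θ n) (θ n))]

/-- Bound (D.7) on the path-wise second-moment statistic `V` of the scalar martingale
difference sequence `⟨∇ℓ_n(θ_n) − ∇ℓ̂_n(θ_n), θ_n⟩`. -/
theorem V_bound_scalar_mds
    {E : Type*} [NormedAddCommGroup E] [NormedSpace ℝ E]
    (Θ : Set E) (hne : Θ.Nonempty) (RΘ : ℝ) (hRΘ : ∀ x ∈ Θ, ‖x‖ ≤ RΘ)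
    (N : ℕ) (θ : ℕ → E) (hθ : ∀ n ∈ Finset.Icc 1 N, θ n ∈ Θ)
    (l lhat : ℕ → E → ℝ) (β : ℝ) (hβ : 0 < β)
    (hlCSN : ∀ n ∈ Finset.Icc 1 N, IsCSN (l n) β)
    (hlhatCSN : ∀ n ∈ Finset.Icc 1 N, IsCSN (lhat n) β)
    (ε εhat : ℝ)
    (hε : ε = (1 / (N : ℝ)) * sInf ((fun x => ∑ n ∈ Finset.Icc 1 N, l n x) '' Θ))
    (hεhat : εhat = (1 / (N : ℝ)) * sInf ((fun x => ∑ n ∈ Finset.Icc 1 N, lhat n x) '' Θ)) :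
    ∑ n ∈ Finset.Icc 1 N,
        ((fderiv ℝ (l n) (θ n) - fderiv ℝ (lhat n) (θ n)) (θ n)) ^ 2
      ≤ 8 * β * RΘ ^ 2
          * (regret Θ N l θ + regret Θ N lhat θ + N * ε + N * εhat) :=
  V_bound_scalar_mds_general Θ RΘ hRΘ N θ hθ l lhat β hβ hlCSN hlhatCSN ε εhat hε hεhat
end
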